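/- Let K = (K, ≤, M) be a countable rooted Kripke model in a language σ. Then there is an onto function f : Γ* → K such that: (1) K' = (Γ*, ⪯, M') is a Kripke model, where M'_x := M_{f(x)} for every x ∈ Γ*; and (2) for every node k ∈ K, every σ(M_k)-sentence φ, and every x ∈ Γ* with f(x) = k, x forces φ in K' if and only if k forces φ in K. -/

import Mathlib

/- Kripke models for intuitionistic first-order logic over an arbitrary
language, and the transformation of a countable rooted Kripke model onto the
full infinite binary tree (finite binary strings ordered by prefix). -/

namespace Pap18

/-- A first-order language: function and relation symbols of each arity. -/
structure Lang where
  Func : ℕ → Type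
  Rel : ℕ → Type

/-- Terms over the language `σ` with extra constants from `C` (de Bruijn
variables). -/
inductive GTerm (σ : Lang) (C : Type) : Type
  | var : ℕ → GTerm σ C
  | const : C → GTerm σ C
  | func : {n : ℕ} → σ.Func n → (Fin n → GTerm σ C) → GTerm σ C

/-- First-order formulas over `σ` with constants from `C`. -/
inductive GFormula (σ : Lang) (C : Type) : Type
  | falsum : GFormula σ C
  | eq : GTerm σ C → GTerm σ C → GFormula σ C
  | rel : {n : ℕ} → σ.Rel n → (Fin n → GTerm σ C) → GFormula σ C
  | conj : GFormula σ C → GFormula σ C → GFormula σ C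
  | disj : GFormula σ C → GFormula σ C → GFormula σ C
  | impl : GFormula σ C → GFormula σ C → GFormula σ C
  | all : GFormula σ C → GFormula σ C
  | ex : GFormula σ C → GFormula σ C

variable {σ : Lang} {C : Type} {W : Type} {le : W → W → Prop}

def vcons {α : Type*} (a : α) (v : ℕ → α) : ℕ → α
  | 0 => a
  | n + 1 => v n

/-- A Kripke model for the language `σ(C)` on the partially ordered frame
`(W, le)`: each node carries a classical structure, and these grow along the
order (substructures, via injective embeddings commuting with all the
interpretations). -/
structure GKripke (σ : Lang) (C W : Type) (le : W → W → Prop) where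
  ne : Nonempty W
  le_refl : ∀ w, le w w
  le_trans : ∀ {a b c}, le a b → le b c → le a c
  le_antisymm : ∀ {a b}, le a b → le b a → a = b
  dom : W → Type
  inh : ∀ w, Nonempty (dom w)
  emb : ∀ {a b}, le a b → dom a → dom b
  emb_refl : ∀ (w) (x : dom w), emb (le_refl w) x = x
  emb_trans : ∀ {a b c} (h₁ : le a b) (h₂ : le b c) (x : dom a),
      emb (le_trans h₁ h₂) x = emb h₂ (emb h₁ x)
  emb_inj : ∀ {a b} (h : le a b), Function.Injective (emb h)
  interpF : ∀ (w) {n : ℕ}, σ.Func n → (Fin n → dom w) → dom w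
  interpR : ∀ (w) {n : ℕ}, σ.Rel n → (Fin n → dom w) → Prop
  interpF_emb : ∀ {a b} (h : le a b) {n : ℕ} (f : σ.Func n) (v : Fin n → dom a),
      emb h (interpF a f v) = interpF b f fun i => emb h (v i)
  interpR_emb : ∀ {a b} (h : le a b) {n : ℕ} (R : σ.Rel n) (v : Fin n → dom a),
      (interpR a R v ↔ interpR b R fun i => emb h (v i))
  cInt : ∀ w, C → dom w
  cInt_emb : ∀ {a b} (h : le a b) (c : C), emb h (cInt a c) = cInt b c

/-- Value of a term at a node, under a valuation. -/
def GTerm.val (K : GKripke σ C W le) (w : W) (v : ℕ → K.dom w) :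
    GTerm σ C → K.dom w
  | .var n => v n
  | .const c => K.cInt w c
  | .func f ts => K.interpF w f fun i => (ts i).val K w v

/-- Kripke forcing `w ⊩ φ [v]`. -/
def GKripke.force (K : GKripke σ C W le) :
    GFormula σ C → (w : W) → (ℕ → K.dom w) → Prop
  | .falsum, _, _ => False
  | .eq t u, w, v => t.val K w v = u.val K w v
  | .rel R ts, w, v => K.interpR w R fun i => (ts i).val K w v
  | .conj φ ψ, w, v => K.force φ w v ∧ K.force ψ w v
  | .disj φ ψ, w, v => K.force φ w v ∨ K.force ψ w v
  | .impl φ ψ, w, v => ∀ w' (h : le w w'),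
      K.force φ w' (fun n => K.emb h (v n)) → K.force ψ w' (fun n => K.emb h (v n))
  | .all φ, w, v => ∀ w' (h : le w w') (a : K.dom w'),
      K.force φ w' (vcons a fun n => K.emb h (v n))
  | .ex φ, w, v => ∃ a, K.force φ w (vcons a v)

/-- Pulling a Kripke model back along a monotone map of frames: the node `x`
carries the classical structure of the node `f x`. -/
def GKripke.pullback {W' : Type} {le' : W' → W' → Prop} (K : GKripke σ C W le)
    (f : W' → W) (ne' : Nonempty W') (refl' : ∀ x, le' x x)
    (trans' : ∀ {a b c}, le' a b → le' b c → le' a c)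
    (anti' : ∀ {a b}, le' a b → le' b a → a = b)
    (hf : ∀ {a b}, le' a b → le (f a) (f b)) : GKripke σ C W' le' where
  ne := ne'
  le_refl := refl'
  le_trans := trans'
  le_antisymm := anti'
  dom x := K.dom (f x)
  inh x := K.inh (f x)
  emb := fun {a b} h x => K.emb (hf h) x
  emb_refl := fun x a => K.emb_refl (f x) a
  emb_trans := fun {a b c} h₁ h₂ x => K.emb_trans (hf h₁) (hf h₂) x
  emb_inj := fun {a b} h => K.emb_inj (hf h)
  interpF := fun x {n} g v => K.interpF (f x) g v
  interpR := fun x {n} R v => K.interpR (f x) R v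
  interpF_emb := fun {a b} h {n} g v => K.interpF_emb (hf h) g v
  interpR_emb := fun {a b} h {n} R v => K.interpR_emb (hf h) R v
  cInt := fun x c => K.cInt (f x) c
  cInt_emb := fun {a b} h c => K.cInt_emb (hf h) c

/- Enumerate `W` by a sequence `e` that takes every value at arbitrarily large indices, and read a
binary string from the root as a program: `false` increments a counter `c`, and `true` jumps to
`e c` if that node lies above the current one, then resets the counter. The node reached is
monotone along prefixes, and every node above the one reached after `x` is reached after some
extension of `x` (append enough `false`s to make `c` an index of the target, then `true`); from the
empty string this gives surjectivity. For a monotone map `f` with this lifting property, forcing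
at `x` in the pullback unfolds clause by clause to forcing at `f x`. -/

section Pullback

variable {W' : Type} {le' : W' → W' → Prop}

lemma val_pullback (K : GKripke σ C W le) (f : W' → W) (ne' : Nonempty W')
    (refl' : ∀ x, le' x x) (trans' : ∀ {a b c}, le' a b → le' b c → le' a c)
    (anti' : ∀ {a b}, le' a b → le' b a → a = b) (hf : ∀ {a b}, le' a b → le (f a) (f b))
    (t : GTerm σ C) (x : W') (v : ℕ → K.dom (f x)) :
    t.val (K.pullback f ne' refl' trans' anti' hf) x v = t.val K (f x) v := by
  induction t with
  | var n => rfl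
  | const c => rfl
  | func g ts ih => exact congrArg (K.interpF (f x) g) (funext ih)

theorem force_pullback_iff (K : GKripke σ C W le) (f : W' → W) (ne' : Nonempty W')
    (refl' : ∀ x, le' x x) (trans' : ∀ {a b c}, le' a b → le' b c → le' a c)
    (anti' : ∀ {a b}, le' a b → le' b a → a = b) (hf : ∀ {a b}, le' a b → le (f a) (f b))
    (hlift : ∀ x w, le (f x) w → ∃ y, le' x y ∧ f y = w)
    (φ : GFormula σ C) (x : W') (v : ℕ → K.dom (f x)) :
    (K.pullback f ne' refl' trans' anti' hf).force φ x v ↔ K.force φ (f x) v := by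
  induction φ generalizing x with
  | falsum => exact Iff.rfl
  | eq t u => simp only [GKripke.force, val_pullback]; exact Iff.rfl
  | rel R ts => simp only [GKripke.force, val_pullback]; exact Iff.rfl
  | conj φ ψ ihφ ihψ => exact and_congr (ihφ x v) (ihψ x v)
  | disj φ ψ ihφ ihψ => exact or_congr (ihφ x v) (ihψ x v)
  | impl φ ψ ihφ ihψ =>
    constructor
    · intro h w hxw hφ
      obtain ⟨y, hxy, rfl⟩ := hlift x w hxw
      exact (ihψ y _).mp (h y hxy ((ihφ y _).mpr hφ))
    · intro h y hxy hφ
      exact (ihψ y _).mpr (h (f y) (hf hxy) ((ihφ y _).mp hφ))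
  | all φ ih =>
    constructor
    · intro h w hxw a
      obtain ⟨y, hxy, rfl⟩ := hlift x w hxw
      exact (ih y _).mp (h y hxy a)
    · intro h y hxy a
      exact (ih y _).mpr (h (f y) (hf hxy) a)
  | ex φ ih => exact exists_congr fun a => ih x (vcons a v)

end Pullback

section BinaryTree

theorem exists_nat_seq_eq_frequently [Nonempty W] [Countable W] :
    ∃ e : ℕ → W, ∀ w m, ∃ n, m ≤ n ∧ e n = w := by
  obtain ⟨e, he⟩ := exists_surjective_nat W
  refine ⟨fun n => e n.unpair.1, fun w m => ?_⟩
  obtain ⟨a, rfl⟩ := he w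
  exact ⟨Nat.pair a m, Nat.right_le_pair a m, by simp⟩

variable (le) (e : ℕ → W)

open Classical in
noncomputable def jumpStep : W × ℕ → Bool → W × ℕ
  | (w, c), false => (w, c + 1)
  | (w, c), true => (if le w (e c) then e c else w, 0)

variable {le}

lemma le_foldl_jumpStep [Std.Refl le] [IsTrans W le] (x : List Bool)
    (p : W × ℕ) : le p.1 (x.foldl (jumpStep le e) p).1 := by
  induction x generalizing p with
  | nil => exact refl_of le p.1
  | cons b x ih =>
    refine trans_of le ?_ (ih _)
    obtain ⟨w, c⟩ := p
    cases b
    · exact refl_of le w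
    · dsimp only [jumpStep]
      split_ifs with h
      exacts [h, refl_of le w]

lemma foldl_jumpStep_replicate_false (k : ℕ) (p : W × ℕ) :
    (List.replicate k false).foldl (jumpStep le e) p = (p.1, p.2 + k) := by
  induction k generalizing p with
  | zero => rfl
  | succ k ih =>
    rw [List.replicate_succ, List.foldl_cons, ih]
    simp only [jumpStep, Prod.mk.injEq, true_and]
    omega

lemma foldl_jumpStep_jump (k : ℕ) (p : W × ℕ) (h : le p.1 (e (p.2 + k))) :
    (List.replicate k false ++ [true]).foldl (jumpStep le e) p = (e (p.2 + k), 0) := by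
  simp [foldl_jumpStep_replicate_false, jumpStep, h]

theorem exists_surjective_prefix_lifting [Std.Refl le] [IsTrans W le] [Countable W] (r : W)
    (hroot : ∀ w, le r w) :
    ∃ f : List Bool → W, Function.Surjective f ∧
      (∀ {a b : List Bool}, a <+: b → le (f a) (f b)) ∧
      ∀ x w, le (f x) w → ∃ y, x <+: y ∧ f y = w := by
  have : Nonempty W := ⟨r⟩
  obtain ⟨e, he⟩ := exists_nat_seq_eq_frequently (W := W)
  let f : List Bool → W := fun x => (x.foldl (jumpStep le e) (r, 0)).1
  have hlift : ∀ x w, le (f x) w → ∃ y, x <+: y ∧ f y = w := by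
    intro x w hxw
    set p := x.foldl (jumpStep le e) (r, 0)
    obtain ⟨n, hmn, rfl⟩ := he w p.2
    have hk : p.2 + (n - p.2) = n := by omega
    refine ⟨x ++ (List.replicate (n - p.2) false ++ [true]), List.prefix_append _ _, ?_⟩
    simp only [f]
    rw [List.foldl_append, foldl_jumpStep_jump e _ p (by rwa [hk]), hk]
  refine ⟨f, fun w => (hlift [] w (hroot w)).imp fun _ => And.right, ?_, hlift⟩
  rintro a _ ⟨z, rfl⟩
  simp only [f]
  rw [List.foldl_append]
  exact le_foldl_jumpStep e z _

end BinaryTree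

theorem stmt18_general (σ : Lang) (C W : Type) (le : W → W → Prop)
    (K : GKripke σ C W le) (r : W) (hroot : ∀ w, le r w)
    (hcW : Countable W) :
    ∃ f : List Bool → W, Function.Surjective f ∧
      ∃ hf : ∀ {a b : List Bool}, a <+: b → le (f a) (f b),
        ∀ (x : List Bool) (φ : GFormula σ C) (v : ℕ → K.dom (f x)),
          ((K.pullback f ⟨[]⟩ (fun l => List.prefix_refl l)
              (fun h₁ h₂ => h₁.trans h₂)
              (fun h₁ h₂ => h₁.eq_of_length (le_antisymm h₁.length_le h₂.length_le))
              (fun h => hf h)).force φ x v ↔ K.force φ (f x) v) := by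
  have : Std.Refl le := ⟨K.le_refl⟩
  have : IsTrans W le := ⟨fun _ _ _ => K.le_trans⟩
  obtain ⟨f, hsurj, hf, hlift⟩ := exists_surjective_prefix_lifting r hroot
  exact ⟨f, hsurj, hf, fun x φ v => force_pullback_iff K f _ _ _ _ _ hlift φ x v⟩

/-- Every countable rooted Kripke model `K` (in any language σ,
with parameters/constants) can be spread onto the full infinite binary tree
`(Γ*, ⪯)` of finite binary strings ordered by the prefix relation: there is an
onto map `f : Γ* → K` such that the pullback `K'` (a Kripke model on `(Γ*, ⪯)`
whose structure at `x` is the structure of `K` at `f x`) forces, at each node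
`x` and for each formula `φ` with parameters from the structure at `f x`,
exactly what `K` forces at `f x`. -/
theorem stmt18 (σ : Lang) (C W : Type) (le : W → W → Prop)
    (K : GKripke σ C W le) (r : W) (hroot : ∀ w, le r w)
    (hcW : Countable W) (hcD : ∀ w, Countable (K.dom w)) :
    ∃ f : List Bool → W, Function.Surjective f ∧
      ∃ hf : ∀ {a b : List Bool}, a <+: b → le (f a) (f b),
        ∀ (x : List Bool) (φ : GFormula σ C) (v : ℕ → K.dom (f x)),
          ((K.pullback f ⟨[]⟩ (fun l => List.prefix_refl l)
              (fun h₁ h₂ => h₁.trans h₂)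
              (fun h₁ h₂ => h₁.eq_of_length (le_antisymm h₁.length_le h₂.length_le))
              (fun h => hf h)).force φ x v ↔ K.force φ (f x) v) :=
  stmt18_general σ C W le K r hroot hcW

end Pap18
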